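/- arXiv:2405.19999 — 3 statements merged into one kernel-verified Lean document; each statement's English description precedes it below -/
import Mathlib

section
/- Let B be a block graph on n vertices containing two cut vertices that do not belong to the same block, and let C_B be the clique tree obtained from B by completing each block of B to a clique on its vertex set. Then λ_1(A(B^c)) ≥ λ_1(A(C_B^c)), with equality if and only if B ≅ C_B, where λ_1(A(·)) denotes the largest adjacency eigenvalue. -/
open Matrix SimpleGraph

/-- A cut vertex of a graph: deleting it disconnects the graph. -/
def IsCutVertex {V : Type*} (G : SimpleGraph V) (v : V) : Prop :=
  ¬ (G.induce {w | w ≠ v}).Connected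

/-- A block of `G`: a maximal vertex set inducing a connected subgraph with no
cut vertex. -/
def IsBlock {V : Type*} (G : SimpleGraph V) (s : Set V) : Prop :=
  (G.induce s).Connected ∧ (∀ v ∈ s, (G.induce (s \ {v})).Connected) ∧
    ∀ t : Set V, s ⊆ t → (G.induce t).Connected →
      (∀ v ∈ t, (G.induce (t \ {v})).Connected) → s = t

/-- `C` is the clique tree obtained from `B` by completing each block of `B` to a
clique on its vertex set. -/
def IsBlockCompletion {V : Type*} (B C : SimpleGraph V) : Prop :=
  ∀ a b, C.Adj a b ↔ (a ≠ b ∧ ∃ s : Set V, IsBlock B s ∧ a ∈ s ∧ b ∈ s)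

section Aux
variable {n : ℕ}

variable {n : ℕ}

lemma herm_adj (G : SimpleGraph (Fin n)) [DecidableRel G.Adj] :
    (G.adjMatrix ℝ).IsHermitian := by
  unfold Matrix.IsHermitian
  rw [conjTranspose_eq_transpose_of_trivial]
  exact G.isSymm_adjMatrix

lemma psd_of_ub {M : Matrix (Fin n) (Fin n) ℝ} (hM : M.IsHermitian) {lam : ℝ}
    (hub : ∀ μ ∈ spectrum ℝ M, μ ≤ lam) :
    (lam • (1 : Matrix (Fin n) (Fin n) ℝ) - M).PosSemidef := by
  have h1 : (lam • (1 : Matrix (Fin n) (Fin n) ℝ)).IsHermitian := by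
    unfold Matrix.IsHermitian
    rw [conjTranspose_eq_transpose_of_trivial]
    simp [Matrix.transpose_smul]
  have hherm : (lam • (1 : Matrix (Fin n) (Fin n) ℝ) - M).IsHermitian := h1.sub hM
  refine hherm.posSemidef_iff_eigenvalues_nonneg.mpr (fun i => (?_ : 0 ≤ hherm.eigenvalues i))
  set μ := hherm.eigenvalues i with hμdef
  have hmem : μ ∈ spectrum ℝ (lam • (1 : Matrix (Fin n) (Fin n) ℝ) - M) :=
    hherm.eigenvalues_mem_spectrum_real i
  have halg : lam • (1 : Matrix (Fin n) (Fin n) ℝ)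
      = algebraMap ℝ (Matrix (Fin n) (Fin n) ℝ) lam :=
    (Algebra.algebraMap_eq_smul_one lam).symm
  rw [halg, ← spectrum.singleton_sub_eq] at hmem
  obtain ⟨x, hx, y, hy, hxy⟩ := Set.mem_sub.mp hmem
  rw [Set.mem_singleton_iff] at hx
  subst hx
  have := hub y hy
  linarith

lemma rayleigh_le {M : Matrix (Fin n) (Fin n) ℝ} (hM : M.IsHermitian) {lam : ℝ}
    (hub : ∀ μ ∈ spectrum ℝ M, μ ≤ lam) (x : Fin n → ℝ) :
    x ⬝ᵥ M *ᵥ x ≤ lam * (x ⬝ᵥ x) := by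
  have hpsd := psd_of_ub hM hub
  have h := hpsd.dotProduct_mulVec_nonneg x
  simp only [RCLike.re_to_real, star_trivial] at h
  rw [Matrix.sub_mulVec, dotProduct_sub, Matrix.smul_mulVec, Matrix.one_mulVec,
    dotProduct_smul] at h
  simp only [smul_eq_mul] at h
  linarith

lemma rayleigh_eq {M : Matrix (Fin n) (Fin n) ℝ} (hM : M.IsHermitian) {lam : ℝ}
    (hub : ∀ μ ∈ spectrum ℝ M, μ ≤ lam) (x : Fin n → ℝ)
    (heq : x ⬝ᵥ M *ᵥ x = lam * (x ⬝ᵥ x)) : M *ᵥ x = lam • x := by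
  have hpsd := psd_of_ub hM hub
  have h0 : (lam • (1 : Matrix (Fin n) (Fin n) ℝ) - M) *ᵥ x = 0 := by
    rw [← hpsd.dotProduct_mulVec_zero_iff x]
    simp only [star_trivial]
    rw [Matrix.sub_mulVec, dotProduct_sub, Matrix.smul_mulVec, Matrix.one_mulVec,
      dotProduct_smul, smul_eq_mul, heq, sub_self]
  rw [Matrix.sub_mulVec, Matrix.smul_mulVec, Matrix.one_mulVec, sub_eq_zero] at h0
  exact h0.symm

lemma exists_eigvec {M : Matrix (Fin n) (Fin n) ℝ} {lam : ℝ}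
    (hmem : lam ∈ spectrum ℝ M) : ∃ v : Fin n → ℝ, v ≠ 0 ∧ M *ᵥ v = lam • v := by
  rw [spectrum.mem_iff] at hmem
  rw [Matrix.isUnit_iff_isUnit_det, isUnit_iff_ne_zero, not_not] at hmem
  obtain ⟨v, hv0, hv⟩ := Matrix.exists_mulVec_eq_zero_iff.mpr hmem
  refine ⟨v, hv0, ?_⟩
  rw [Matrix.sub_mulVec] at hv
  have : (algebraMap ℝ (Matrix (Fin n) (Fin n) ℝ) lam) *ᵥ v = lam • v := by
    rw [Algebra.algebraMap_eq_smul_one, Matrix.smul_mulVec, Matrix.one_mulVec]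
  rw [this] at hv
  exact (sub_eq_zero.mp hv).symm


lemma conn_singleton (G : SimpleGraph (Fin n)) (a : Fin n) :
    (G.induce {a}).Connected := by
  rw [connected_iff]
  refine ⟨fun x y => ?_, ⟨⟨a, rfl⟩⟩⟩
  have : x = y := Subtype.ext (x.2.trans y.2.symm)
  exact this ▸ Reachable.refl x

lemma conn_pair (G : SimpleGraph (Fin n)) {a b : Fin n} (h : G.Adj a b) :
    (G.induce {a, b}).Connected := by
  rw [connected_iff]
  refine ⟨fun x y => ?_, ⟨⟨a, Or.inl rfl⟩⟩⟩
  have key : ∀ z : ({a, b} : Set (Fin n)),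
      (G.induce {a, b}).Reachable ⟨a, Or.inl rfl⟩ z := by
    rintro ⟨z, rfl | hz⟩
    · exact Reachable.refl _
    · rw [Set.mem_singleton_iff] at hz
      subst hz
      refine Adj.reachable ?_
      show G.Adj a z
      exact h
  exact (key x).symm.trans (key y)

lemma good_pair (G : SimpleGraph (Fin n)) {a b : Fin n} (h : G.Adj a b) :
    (G.induce {a, b}).Connected ∧ ∀ v ∈ ({a, b} : Set (Fin n)),
      (G.induce (({a, b} : Set (Fin n)) \ {v})).Connected := by
  refine ⟨conn_pair G h, ?_⟩
  rintro v (rfl | hv)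
  · rw [Set.pair_diff_left h.ne]
    exact conn_singleton G b
  · rw [Set.mem_singleton_iff] at hv; subst hv
    rw [Set.pair_diff_right h.ne]
    exact conn_singleton G a

lemma extend_aux (B : SimpleGraph (Fin n)) (k : ℕ) :
    ∀ s : Set (Fin n), (B.induce s).Connected →
      (∀ v ∈ s, (B.induce (s \ {v})).Connected) → n - s.ncard ≤ k →
      ∃ t, IsBlock B t ∧ s ⊆ t := by
  induction k with
  | zero =>
    intro s h1 h2 hk
    refine ⟨s, ⟨h1, h2, fun t hst ht1 ht2 => ?_⟩, subset_rfl⟩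
    by_contra hne
    have hlt : s.ncard < t.ncard := Set.ncard_lt_ncard (hst.ssubset_of_ne hne) (Set.toFinite t)
    have hle : t.ncard ≤ n := by
      have := Set.ncard_le_ncard (Set.subset_univ t) (Set.toFinite _)
      rwa [Set.ncard_univ, Nat.card_eq_fintype_card, Fintype.card_fin] at this
    omega
  | succ k ih =>
    intro s h1 h2 hk
    by_cases hmax : ∀ t : Set (Fin n), s ⊆ t → (B.induce t).Connected →
        (∀ v ∈ t, (B.induce (t \ {v})).Connected) → s = t
    · exact ⟨s, ⟨h1, h2, hmax⟩, subset_rfl⟩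
    · push_neg at hmax
      obtain ⟨t, hst, ht1, ht2, hne⟩ := hmax
      have hlt : s.ncard < t.ncard := Set.ncard_lt_ncard (hst.ssubset_of_ne hne) (Set.toFinite t)
      have hle : t.ncard ≤ n := by
        have := Set.ncard_le_ncard (Set.subset_univ t) (Set.toFinite _)
        rwa [Set.ncard_univ, Nat.card_eq_fintype_card, Fintype.card_fin] at this
      obtain ⟨t', ht', htt'⟩ := ih t ht1 ht2 (by omega)
      exact ⟨t', ht', hst.trans htt'⟩

lemma block_of_adj (B : SimpleGraph (Fin n)) {a b : Fin n} (h : B.Adj a b) :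
    ∃ s, IsBlock B s ∧ a ∈ s ∧ b ∈ s := by
  obtain ⟨hg1, hg2⟩ := good_pair B h
  obtain ⟨t, ht, hsub⟩ := extend_aux B (n - ({a, b} : Set (Fin n)).ncard) _ hg1 hg2 le_rfl
  exact ⟨t, ht, hsub (Or.inl rfl), hsub (Or.inr rfl)⟩

lemma eigvec_pos (G : SimpleGraph (Fin n)) [DecidableRel G.Adj] (hG : G.Connected)
    {lam : ℝ} {v : Fin n → ℝ} (hnn : ∀ i, 0 ≤ v i)
    (hev : G.adjMatrix ℝ *ᵥ v = lam • v) (hv : v ≠ 0) : ∀ i, 0 < v i := by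
  have hzero : ∀ a, v a = 0 → ∀ b, G.Adj a b → v b = 0 := by
    intro a ha b hab
    have h1 : (G.adjMatrix ℝ *ᵥ v) a = 0 := by rw [hev]; simp [ha]
    rw [SimpleGraph.adjMatrix_mulVec_apply] at h1
    exact (Finset.sum_eq_zero_iff_of_nonneg (fun j _ => hnn j)).mp h1 b
      (by rw [SimpleGraph.mem_neighborFinset]; exact hab)
  have hwalk : ∀ {a b : Fin n}, G.Walk a b → v a = 0 → v b = 0 := by
    intro a b wk
    induction wk with
    | nil => exact id
    | @cons x y z h p ih => intro hx; exact ih (hzero x hx y h)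
  intro i
  rcases (hnn i).lt_or_eq with hlt | heq
  · exact hlt
  · exfalso
    apply hv
    funext j
    exact hwalk ((hG.preconnected i j).some) heq.symm


lemma compl_conn (B : SimpleGraph (Fin n)) {u w : Fin n} (huw : u ≠ w)
    (hnadj : ¬ B.Adj u w) (hcw : IsCutVertex B w) :
    Bᶜ.Connected := by
  have hu : u ∈ {x : Fin n | x ≠ w} := huw
  have hnpre : ¬ ∀ q : ({x : Fin n | x ≠ w} : Set (Fin n)),
      (B.induce {x | x ≠ w}).Reachable ⟨u, hu⟩ q := by
    intro hall
    apply hcw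
    rw [connected_iff]
    exact ⟨fun x y => (hall x).symm.trans (hall y), ⟨⟨u, hu⟩⟩⟩
  push_neg at hnpre
  obtain ⟨⟨p, hp⟩, hnr⟩ := hnpre
  have hup : u ≠ p := by
    rintro rfl; exact hnr (Reachable.refl _)
  have hupadj : ¬ B.Adj u p := by
    intro h
    refine hnr (Adj.reachable ?_)
    show B.Adj u p
    exact h
  have hcommon : ∀ z, ¬ (B.Adj u z ∧ B.Adj z p) := by
    rintro z ⟨h1, h2⟩
    by_cases hzw : z = w
    · subst hzw; exact hnadj h1
    · refine hnr (Reachable.trans (Adj.reachable ?_ :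
        (B.induce {x | x ≠ w}).Reachable ⟨u, hu⟩ ⟨z, hzw⟩) (Adj.reachable ?_))
      · show B.Adj u z; exact h1
      · show B.Adj z p; exact h2
  rw [connected_iff]
  refine ⟨?_, ⟨u⟩⟩
  have key : ∀ x, Bᶜ.Reachable u x := by
    intro x
    by_cases hxu : x = u
    · subst hxu; exact Reachable.refl _
    by_cases hxp : x = p
    · subst hxp
      exact Adj.reachable ((B.compl_adj u x).mpr ⟨hup, hupadj⟩)
    by_cases hux : B.Adj u x
    · have hxpadj : ¬ B.Adj x p := fun h => hcommon x ⟨hux, h⟩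
      have r1 : Bᶜ.Adj u p := (B.compl_adj u p).mpr ⟨hup, hupadj⟩
      have r2 : Bᶜ.Adj p x := (B.compl_adj p x).mpr
        ⟨fun h => hxp h.symm, fun h => hxpadj h.symm⟩
      exact r1.reachable.trans r2.reachable
    · exact Adj.reachable ((B.compl_adj u x).mpr ⟨fun h => hxu h.symm, hux⟩)
  exact fun x y => (key x).symm.trans (key y)

end Aux

/-- If the connected block graph `B` has two cut vertices lying in no common block,
then the adjacency spectral radius of `Bᶜ` is at least that of `C_Bᶜ`, with
equality iff `B ≅ C_B`. -/
theorem stmt10 {n : ℕ} (B C : SimpleGraph (Fin n))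
    [DecidableRel B.Adj] [DecidableRel C.Adj]
    (hB : B.Connected) (hC : IsBlockCompletion B C)
    (hcut : ∃ u w : Fin n, u ≠ w ∧ IsCutVertex B u ∧ IsCutVertex B w ∧
      ¬ ∃ s : Set (Fin n), IsBlock B s ∧ u ∈ s ∧ w ∈ s)
    (lamB lamC : ℝ)
    (hlamB : IsGreatest (spectrum ℝ (Bᶜ.adjMatrix ℝ)) lamB)
    (hlamC : IsGreatest (spectrum ℝ (Cᶜ.adjMatrix ℝ)) lamC) :
    lamC ≤ lamB ∧ (lamB = lamC ↔ Nonempty (B ≃g C)) := by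
  obtain ⟨u, w, huw, hcu, hcw, hnob⟩ := hcut
  have hBle : B ≤ C := fun a b hab => (hC a b).mpr ⟨hab.ne, block_of_adj B hab⟩
  have hnadj : ¬ B.Adj u w := fun h => hnob (block_of_adj B h)
  have hconn : Bᶜ.Connected := compl_conn B huw hnadj hcw
  have hermB : (Bᶜ.adjMatrix ℝ).IsHermitian := herm_adj _
  have hubB : ∀ μ ∈ spectrum ℝ (Bᶜ.adjMatrix ℝ), μ ≤ lamB := fun μ h => hlamB.2 h
  have hcompl : ∀ {i j : Fin n}, Cᶜ.Adj i j → Bᶜ.Adj i j := by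
    intro i j h
    rw [compl_adj] at h ⊢
    exact ⟨h.1, fun hb => h.2 (hBle hb)⟩
  obtain ⟨z, hz0, hz⟩ := exists_eigvec hlamC.1
  set za : Fin n → ℝ := fun i => |z i| with hza
  have hzaza : za ⬝ᵥ za = z ⬝ᵥ z := by
    simp [dotProduct, hza, abs_mul_abs_self]
  have hzz : 0 < z ⬝ᵥ z := by
    have h1 : z ⬝ᵥ z ≠ 0 := fun h => hz0 (dotProduct_self_eq_zero.mp h)
    have h2 : 0 ≤ z ⬝ᵥ z := Finset.sum_nonneg fun i _ => mul_self_nonneg _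
    exact h2.lt_of_ne (Ne.symm h1)
  have e1 : z ⬝ᵥ (Cᶜ.adjMatrix ℝ) *ᵥ z = lamC * (z ⬝ᵥ z) := by
    rw [hz, dotProduct_smul, smul_eq_mul]
  have i2 : z ⬝ᵥ (Cᶜ.adjMatrix ℝ) *ᵥ z ≤ za ⬝ᵥ (Cᶜ.adjMatrix ℝ) *ᵥ za := by
    rw [dotProduct_mulVec_adjMatrix, dotProduct_mulVec_adjMatrix]
    refine Finset.sum_le_sum fun i _ => Finset.sum_le_sum fun j _ => ?_
    split_ifs with h
    · exact (le_abs_self _).trans (le_of_eq (abs_mul _ _))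
    · exact le_rfl
  have i3 : za ⬝ᵥ (Cᶜ.adjMatrix ℝ) *ᵥ za ≤ za ⬝ᵥ (Bᶜ.adjMatrix ℝ) *ᵥ za := by
    rw [dotProduct_mulVec_adjMatrix, dotProduct_mulVec_adjMatrix]
    refine Finset.sum_le_sum fun i _ => Finset.sum_le_sum fun j _ => ?_
    split_ifs with h1 h2 h2
    · exact le_rfl
    · exact absurd (hcompl h1) h2
    · exact mul_nonneg (abs_nonneg _) (abs_nonneg _)
    · exact le_rfl
  have i4 : za ⬝ᵥ (Bᶜ.adjMatrix ℝ) *ᵥ za ≤ lamB * (z ⬝ᵥ z) := by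
    have := rayleigh_le hermB hubB za
    rwa [hzaza] at this
  have hineq : lamC ≤ lamB := by
    have h := le_trans (le_trans (le_of_eq e1.symm) (le_trans i2 i3)) i4
    exact le_of_mul_le_mul_right (by linarith) hzz
  refine ⟨hineq, ?_, ?_⟩
  · -- equality → isomorphism
    intro heq
    have e4 : za ⬝ᵥ (Bᶜ.adjMatrix ℝ) *ᵥ za = lamB * (za ⬝ᵥ za) := by
      rw [hzaza]
      refine le_antisymm i4 ?_
      have : lamB * (z ⬝ᵥ z) = lamC * (z ⬝ᵥ z) := by rw [heq]
      linarith [i2, i3, e1]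
    have hevB : (Bᶜ.adjMatrix ℝ) *ᵥ za = lamB • za := rayleigh_eq hermB hubB za e4
    have hza0 : za ≠ 0 := fun h => hz0 (funext fun i => abs_eq_zero.mp (congrFun h i))
    have hpos : ∀ i, 0 < za i :=
      eigvec_pos Bᶜ hconn (fun i => abs_nonneg _) hevB hza0
    have hsumeq : za ⬝ᵥ (Cᶜ.adjMatrix ℝ) *ᵥ za = za ⬝ᵥ (Bᶜ.adjMatrix ℝ) *ᵥ za := by
      refine le_antisymm i3 ?_
      have he4' : za ⬝ᵥ (Bᶜ.adjMatrix ℝ) *ᵥ za = lamB * (z ⬝ᵥ z) := by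
        rw [e4, hzaza]
      have : lamB * (z ⬝ᵥ z) = lamC * (z ⬝ᵥ z) := by rw [heq]
      linarith [i2, e1]
    have hCle : C ≤ B := by
      intro a b hab
      by_contra hnb
      have hBadj : Bᶜ.Adj a b := (B.compl_adj a b).mpr ⟨hab.ne, hnb⟩
      have hCadj : ¬ Cᶜ.Adj a b := fun h => ((C.compl_adj a b).mp h).2 hab
      have htermnn : ∀ i j : Fin n, (0:ℝ) ≤
          (if Bᶜ.Adj i j then za i * za j else 0) -
            (if Cᶜ.Adj i j then za i * za j else 0) := by
        intro i j
        split_ifs with h1 h2 h2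
        · simp
        · simpa using mul_nonneg (abs_nonneg (z i)) (abs_nonneg (z j))
        · exact absurd (hcompl h2) h1
        · simp
      have hsum0 : ∑ i, ∑ j, ((if Bᶜ.Adj i j then za i * za j else 0) -
          (if Cᶜ.Adj i j then za i * za j else 0)) = 0 := by
        simp only [Finset.sum_sub_distrib]
        rw [← dotProduct_mulVec_adjMatrix, ← dotProduct_mulVec_adjMatrix, hsumeq, sub_self]
      have h1 := (Finset.sum_eq_zero_iff_of_nonneg
        (fun i _ => Finset.sum_nonneg fun j _ => htermnn i j)).mp hsum0 a (Finset.mem_univ a)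
      have h2 := (Finset.sum_eq_zero_iff_of_nonneg
        (fun j _ => htermnn a j)).mp h1 b (Finset.mem_univ b)
      rw [if_pos hBadj, if_neg hCadj, sub_zero] at h2
      exact (mul_pos (hpos a) (hpos b)).ne' h2
    have hBeq : B = C := le_antisymm hBle hCle
    exact hBeq ▸ (⟨Iso.refl⟩ : Nonempty (B ≃g B))
  · -- isomorphism → equality
    rintro ⟨e⟩
    have hf : ∀ a b, C.Adj (e.toEquiv a) (e.toEquiv b) ↔ B.Adj a b := fun a b => e.map_adj_iff
    have hf2 : ∀ i j, (C.Adj i j ↔ B.Adj (e.toEquiv.symm i) (e.toEquiv.symm j)) := by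
      intro i j
      have := hf (e.toEquiv.symm i) (e.toEquiv.symm j)
      rwa [Equiv.apply_symm_apply, Equiv.apply_symm_apply] at this
    have hadj : ∀ i j, (Cᶜ.Adj i j ↔ Bᶜ.Adj (e.toEquiv.symm i) (e.toEquiv.symm j)) := by
      intro i j
      simp only [compl_adj, ne_eq, Equiv.apply_eq_iff_eq, hf2]
    have hMeq : Cᶜ.adjMatrix ℝ = reindexAlgEquiv ℝ ℝ e.toEquiv (Bᶜ.adjMatrix ℝ) := by
      ext i j
      rw [reindexAlgEquiv_apply, reindex_apply, submatrix_apply]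
      simp only [adjMatrix_apply]
      simp only [hadj]
    have hspec : spectrum ℝ (Cᶜ.adjMatrix ℝ) = spectrum ℝ (Bᶜ.adjMatrix ℝ) := by
      rw [hMeq]
      exact AlgEquiv.spectrum_eq _ _
    exact hlamB.unique (hspec ▸ hlamC)
end

section
/- Let B be a block graph on n vertices containing two cut vertices that do not belong to the same block, and let C_B be the clique tree obtained from B by completing each block to a clique. Then λ_1(D(B^c)) ≤ λ_1(D(C_B^c)), with equality if and only if B ≅ C_B, where λ_1(D(·)) is the largest eigenvalue of the distance matrix. -/
open Matrix SimpleGraph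

/-- The distance matrix of a simple graph, with real entries. -/
noncomputable def distMatrix {n : ℕ} (G : SimpleGraph (Fin n)) : Matrix (Fin n) (Fin n) ℝ :=
  fun i j => (G.dist i j : ℝ)

lemma distMatrix_isHermitian {n : ℕ} (G : SimpleGraph (Fin n)) :
    (distMatrix G).IsHermitian := by
  unfold Matrix.IsHermitian
  ext i j
  simp [distMatrix, conjTranspose_apply, SimpleGraph.dist_comm]


namespace Aux

variable {V : Type*} {G : SimpleGraph V}

lemma induce_adj {s : Set V} {x y : {v // v ∈ s}} :
    (G.induce s).Adj x y ↔ G.Adj x.1 y.1 := by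
  simp [comap_adj]

lemma reach_mono {s t : Set V} (hst : s ⊆ t) {a b : V} (ha : a ∈ s) (hb : b ∈ s)
    (h : (G.induce s).Reachable ⟨a, ha⟩ ⟨b, hb⟩) :
    (G.induce t).Reachable ⟨a, hst ha⟩ ⟨b, hst hb⟩ := by
  exact Reachable.map
    ⟨fun x => ⟨x.1, hst x.2⟩, fun hxy => induce_adj.mpr (induce_adj.mp hxy)⟩ h

lemma exists_walk_of_induce_walk {s : Set V} {x y : {v // v ∈ s}}
    (p : (G.induce s).Walk x y) : ∃ W : G.Walk x.1 y.1, ∀ z ∈ W.support, z ∈ s := by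
  induction p with
  | nil => exact ⟨.nil, by simp⟩
  | @cons a b c h p ih =>
    obtain ⟨W, hW⟩ := ih
    refine ⟨.cons (induce_adj.mp h) W, ?_⟩
    intro z hz
    rw [SimpleGraph.Walk.support_cons, List.mem_cons] at hz
    rcases hz with rfl | hz
    · exact a.2
    · exact hW z hz

lemma induce_reach_of_walk {s : Set V} {a b : V} (W : G.Walk a b)
    (hs : ∀ z ∈ W.support, z ∈ s) (ha : a ∈ s) (hb : b ∈ s) :
    (G.induce s).Reachable ⟨a, ha⟩ ⟨b, hb⟩ := by
  induction W with
  | nil => rfl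
  | @cons u v c h p ih =>
    have hv : v ∈ s := hs v (by simp)
    have h1 : (G.induce s).Adj ⟨u, ha⟩ ⟨v, hv⟩ := induce_adj.mpr h
    exact h1.reachable.trans (ih (fun z hz => hs z (by simp [hz])) hv hb)

lemma exists_block_of_adj [Finite V] {a b : V} (hab : G.Adj a b) :
    ∃ s : Set V, IsBlock G s ∧ a ∈ s ∧ b ∈ s := by
  classical
  set T : Set (Set V) :=
    {t | a ∈ t ∧ b ∈ t ∧ (G.induce t).Connected ∧
      (∀ v ∈ t, (G.induce (t \ {v})).Connected)} with hT
  have hne : ({a, b} : Set V) ∈ T := by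
    have hab' : a ≠ b := hab.ne
    refine ⟨by simp, by simp, ?_, ?_⟩
    · constructor
      · rintro ⟨x, hx⟩ ⟨y, hy⟩
        rcases hx with rfl | rfl <;> rcases hy with rfl | rfl
        · rfl
        · exact (induce_adj.mpr hab).reachable
        · exact (induce_adj.mpr hab.symm).reachable
        · rfl
    · intro v hv
      rcases hv with rfl | rfl
      · have : ({v, b} : Set V) \ {v} = {b} := by
          ext z; simp only [Set.mem_diff, Set.mem_insert_iff, Set.mem_singleton_iff]
          constructor
          · rintro ⟨rfl | rfl, h2⟩ <;> simp_all
          · rintro rfl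
            exact ⟨Or.inr rfl, hab'.symm⟩
        rw [this]
        constructor
        · rintro ⟨x, hx⟩ ⟨y, hy⟩
          simp only [Set.mem_singleton_iff] at hx hy
          subst hx; subst hy; rfl
      · have : ({a, v} : Set V) \ {v} = {a} := by
          ext z; simp only [Set.mem_diff, Set.mem_insert_iff, Set.mem_singleton_iff]
          constructor
          · rintro ⟨rfl | rfl, h2⟩ <;> simp_all
          · rintro rfl
            exact ⟨Or.inl rfl, hab'⟩
        rw [this]
        constructor
        · rintro ⟨x, hx⟩ ⟨y, hy⟩
          simp only [Set.mem_singleton_iff] at hx hy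
          subst hx; subst hy; rfl
  obtain ⟨s, hsT, hsmax⟩ := Set.Finite.exists_maximalFor Set.ncard T (Set.toFinite T)
    ⟨_, hne⟩
  refine ⟨s, ⟨hsT.2.2.1, hsT.2.2.2, ?_⟩, hsT.1, hsT.2.1⟩
  intro t hst hconn hdel
  have htT : t ∈ T := ⟨hst hsT.1, hst hsT.2.1, hconn, hdel⟩
  have hcard : s.ncard = t.ncard :=
    le_antisymm (Set.ncard_le_ncard hst (Set.toFinite t))
      (hsmax htT (Set.ncard_le_ncard hst (Set.toFinite t)))
  exact Set.eq_of_subset_of_ncard_le hst hcard.ge (Set.toFinite t)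

end Aux

namespace Aux

variable {V : Type*} {B C : SimpleGraph V}

lemma edge_transfer (hC : IsBlockCompletion B C) {u : V} {x y : V}
    (hx : x ≠ u) (hy : y ≠ u) (hadj : C.Adj x y) :
    (B.induce {z | z ≠ u}).Reachable ⟨x, hx⟩ ⟨y, hy⟩ := by
  obtain ⟨hne, s, hs, hxs, hys⟩ := (hC x y).mp hadj
  by_cases hu : u ∈ s
  · have h2 := hs.2.1 u hu
    have hx' : x ∈ s \ {u} := ⟨hxs, hx⟩
    have hy' : y ∈ s \ {u} := ⟨hys, hy⟩
    have := h2.preconnected ⟨x, hx'⟩ ⟨y, hy'⟩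
    exact reach_mono (fun z hz => hz.2) hx' hy' this
  · have h1 := hs.1.preconnected ⟨x, hxs⟩ ⟨y, hys⟩
    exact reach_mono (fun z hz => show z ≠ u from fun h => hu (h ▸ hz)) hxs hys h1

lemma reach_transfer (hC : IsBlockCompletion B C) {u : V} {x y : {z | z ≠ u}}
    (h : (C.induce {z | z ≠ u}).Reachable x y) :
    (B.induce {z | z ≠ u}).Reachable x y := by
  obtain ⟨p⟩ := h
  induction p with
  | nil => rfl
  | @cons a b c h p ih =>
    exact (edge_transfer hC a.2 b.2 (induce_adj.mp h)).trans ih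

end Aux

namespace Aux

variable {V : Type*} {B C : SimpleGraph V}

lemma length_one_le {a b : V} (hne : a ≠ b) (Q : C.Walk a b) : 1 ≤ Q.length := by
  by_contra hlt
  push_neg at hlt
  exact hne (Walk.eq_of_length_eq_zero (Nat.lt_one_iff.mp hlt))

lemma length_two_le {a b : V} (hne : a ≠ b) (hnadj : ¬C.Adj a b) (Q : C.Walk a b) :
    2 ≤ Q.length := by
  by_contra hlt
  push_neg at hlt
  interval_cases h : Q.length
  · exact hne (Walk.eq_of_length_eq_zero h)
  · exact hnadj (Walk.adj_of_length_eq_one h)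

lemma exists_far_pair [Finite V] (hC : IsBlockCompletion B C) (hBconn : B.Connected)
    (hBC : B ≤ C)
    (hcut : ∃ u w : V, u ≠ w ∧ ¬(B.induce {z | z ≠ u}).Connected ∧
      ¬(B.induce {z | z ≠ w}).Connected ∧
      ¬ ∃ s : Set V, IsBlock B s ∧ u ∈ s ∧ w ∈ s) :
    ∃ x y : V, ∀ W : C.Walk x y, 4 ≤ W.length := by
  classical
  obtain ⟨u, w, huw, hu, hw, hnoblk⟩ := hcut
  have hCconn : C.Connected := hBconn.mono hBC
  have hnadj : ¬C.Adj u w := fun h => hnoblk ((hC u w).mp h).2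
  -- u disconnects C
  have hCu : ¬(C.induce {z | z ≠ u}).Preconnected := by
    intro hp
    refine hu ?_
    haveI : Nonempty {z // z ∈ {z | z ≠ u}} := ⟨⟨w, huw.symm⟩⟩
    exact ⟨fun a b => reach_transfer hC (hp a b)⟩
  have hCw : ¬(C.induce {z | z ≠ w}).Preconnected := by
    intro hp
    refine hw ?_
    haveI : Nonempty {z // z ∈ {z | z ≠ w}} := ⟨⟨u, huw⟩⟩
    exact ⟨fun a b => reach_transfer hC (hp a b)⟩
  -- choose x separated from w in C - u
  obtain ⟨p, q, hpq⟩ : ∃ p q : {z // z ∈ {z | z ≠ u}},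
      ¬(C.induce {z | z ≠ u}).Reachable p q := by
    by_contra hc
    push_neg at hc
    exact hCu fun a b => hc a b
  have hxex : ∃ x : {z // z ∈ {z | z ≠ u}},
      ¬(C.induce {z | z ≠ u}).Reachable x ⟨w, huw.symm⟩ := by
    by_cases hpr : (C.induce {z | z ≠ u}).Reachable p ⟨w, huw.symm⟩
    · exact ⟨q, fun hqr => hpq (hpr.trans hqr.symm)⟩
    · exact ⟨p, hpr⟩
  obtain ⟨x', hx'⟩ := hxex
  obtain ⟨p2, q2, hpq2⟩ : ∃ p q : {z // z ∈ {z | z ≠ w}},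
      ¬(C.induce {z | z ≠ w}).Reachable p q := by
    by_contra hc
    push_neg at hc
    exact hCw fun a b => hc a b
  have hyex : ∃ y : {z // z ∈ {z | z ≠ w}},
      ¬(C.induce {z | z ≠ w}).Reachable y ⟨u, huw⟩ := by
    by_cases hpr : (C.induce {z | z ≠ w}).Reachable p2 ⟨u, huw⟩
    · exact ⟨q2, fun hqr => hpq2 (hpr.trans hqr.symm)⟩
    · exact ⟨p2, hpr⟩
  obtain ⟨y', hy'⟩ := hyex
  set x := x'.1 with hxdef
  set y := y'.1 with hydef
  have hxu : x ≠ u := x'.2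
  have hyw : y ≠ w := y'.2
  -- every C-walk from x to w passes through u
  have h1 : ∀ W : C.Walk x w, u ∈ W.support := by
    intro W
    by_contra hu'
    have hsup : ∀ z ∈ W.support, z ∈ {z | z ≠ u} := fun z hz he => hu' (he ▸ hz)
    exact hx' (induce_reach_of_walk W hsup x'.2 huw.symm)
  have h2 : ∀ W : C.Walk y u, w ∈ W.support := by
    intro W
    by_contra hw'
    have hsup : ∀ z ∈ W.support, z ∈ {z | z ≠ w} := fun z hz he => hw' (he ▸ hz)
    exact hy' (induce_reach_of_walk W hsup y'.2 huw)
  have hxw : x ≠ w := by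
    intro he
    subst he
    have := h1 Walk.nil
    rw [Walk.support_nil, List.mem_singleton] at this
    exact hxu this.symm
  have hyu : y ≠ u := by
    intro he
    subst he
    have := h2 Walk.nil
    rw [Walk.support_nil, List.mem_singleton] at this
    exact huw this.symm
  -- a walk from y to w avoiding u
  have hyw_walk : ∃ W : C.Walk y w, u ∉ W.support := by
    obtain ⟨P0⟩ := hCconn y w
    let P := P0.toPath
    by_cases hmem : u ∈ P.1.support
    · exfalso
      have hQ := h2 (P.1.takeUntil u hmem)
      have hD : w ∈ (P.1.dropUntil u hmem).support.tail :=
        Walk.end_mem_tail_support_of_ne huw _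
      have hnodup := P.2.support_nodup
      rw [← P.1.take_spec hmem, Walk.support_append, List.nodup_append] at hnodup
      exact hnodup.2.2 _ hQ _ hD rfl
    · exact ⟨P.1, hmem⟩
  have hxu_walk : ∃ W : C.Walk x u, w ∉ W.support := by
    obtain ⟨P0⟩ := hCconn x u
    let P := P0.toPath
    by_cases hmem : w ∈ P.1.support
    · exfalso
      have hQ := h1 (P.1.takeUntil w hmem)
      have hD : u ∈ (P.1.dropUntil w hmem).support.tail :=
        Walk.end_mem_tail_support_of_ne huw.symm _
      have hnodup := P.2.support_nodup
      rw [← P.1.take_spec hmem, Walk.support_append, List.nodup_append] at hnodup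
      exact hnodup.2.2 _ hQ _ hD rfl
    · exact ⟨P.1, hmem⟩
  have S1 : ∀ W : C.Walk x y, u ∈ W.support := by
    intro W
    by_contra hu'
    obtain ⟨W', hW'⟩ := hyw_walk
    have := h1 (W.append W')
    rw [Walk.mem_support_append_iff] at this
    rcases this with h | h
    · exact hu' h
    · exact hW' h
  have S2 : ∀ W : C.Walk x y, w ∈ W.support := by
    intro W
    by_contra hw'
    obtain ⟨W'', hW''⟩ := hxu_walk
    have := h2 (W.reverse.append W'')
    rw [Walk.mem_support_append_iff] at this
    rcases this with h | h
    · rw [Walk.support_reverse, List.mem_reverse] at h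
      exact hw' h
    · exact hW'' h
  refine ⟨x, y, fun W => ?_⟩
  have hu' := S1 W
  have hw' := S2 W
  have hsplit : (W.takeUntil u hu').length + (W.dropUntil u hu').length = W.length := by
    have := congrArg Walk.length (W.take_spec hu')
    rwa [Walk.length_append] at this
  have hwmem : w ∈ (W.takeUntil u hu').support ∨ w ∈ (W.dropUntil u hu').support := by
    rw [← Walk.mem_support_append_iff, W.take_spec hu']
    exact hw'
  rcases hwmem with hm | hm
  · set T := W.takeUntil u hu'
    have hsplit2 : (T.takeUntil w hm).length + (T.dropUntil w hm).length = T.length := by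
      have := congrArg Walk.length (T.take_spec hm)
      rwa [Walk.length_append] at this
    have l1 : 1 ≤ (T.takeUntil w hm).length := length_one_le hxw _
    have l2 : 2 ≤ (T.dropUntil w hm).length :=
      length_two_le huw.symm (fun h => hnadj h.symm) _
    have l3 : 1 ≤ (W.dropUntil u hu').length := length_one_le hyu.symm _
    omega
  · set D := W.dropUntil u hu'
    have hsplit2 : (D.takeUntil w hm).length + (D.dropUntil w hm).length = D.length := by
      have := congrArg Walk.length (D.take_spec hm)
      rwa [Walk.length_append] at this
    have l1 : 2 ≤ (D.takeUntil w hm).length := length_two_le huw hnadj _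
    have l2 : 1 ≤ (D.dropUntil w hm).length := length_one_le hyw.symm _
    have l3 : 1 ≤ (W.takeUntil u hu').length := length_one_le hxu _
    omega

end Aux

namespace Aux

variable {V : Type*} {C : SimpleGraph V}

lemma compl_preconnected (Hlen : ∃ x y : V, ∀ W : C.Walk x y, 4 ≤ W.length) :
    Cᶜ.Preconnected := by
  obtain ⟨x, y, H⟩ := Hlen
  intro i j
  by_cases hij : i = j
  · subst hij; rfl
  by_cases hadj : C.Adj i j
  · have hclose : ∀ k, ¬(k = i ∨ k = j ∨ C.Adj i k ∨ C.Adj j k) →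
        (¬C.Adj i k ∧ ¬C.Adj j k ∧ k ≠ i ∧ k ≠ j) := by
      intro k hk
      push_neg at hk
      exact ⟨hk.2.2.1, hk.2.2.2, hk.1, hk.2.1⟩
    have hfind : ∃ k, ¬C.Adj i k ∧ ¬C.Adj j k ∧ k ≠ i ∧ k ≠ j := by
      by_contra hc
      push_neg at hc
      have hcx : x = i ∨ x = j ∨ C.Adj i x ∨ C.Adj j x := by
        by_contra h; obtain ⟨a1, a2, a3, a4⟩ := hclose x h; exact a4 (hc x a1 a2 a3)
      have hcy : y = i ∨ y = j ∨ C.Adj i y ∨ C.Adj j y := by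
        by_contra h; obtain ⟨a1, a2, a3, a4⟩ := hclose y h; exact a4 (hc y a1 a2 a3)
      -- build a short walk from x to y
      have hWx : ∃ t : V, (t = i ∨ t = j) ∧ ∃ A : C.Walk x t, A.length ≤ 1 := by
        rcases hcx with rfl | rfl | h | h
        · exact ⟨x, Or.inl rfl, Walk.nil, by simp⟩
        · exact ⟨x, Or.inr rfl, Walk.nil, by simp⟩
        · exact ⟨i, Or.inl rfl, Walk.cons h.symm Walk.nil, by simp⟩
        · exact ⟨j, Or.inr rfl, Walk.cons h.symm Walk.nil, by simp⟩
      have hWy : ∃ t : V, (t = i ∨ t = j) ∧ ∃ A : C.Walk y t, A.length ≤ 1 := by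
        rcases hcy with rfl | rfl | h | h
        · exact ⟨y, Or.inl rfl, Walk.nil, by simp⟩
        · exact ⟨y, Or.inr rfl, Walk.nil, by simp⟩
        · exact ⟨i, Or.inl rfl, Walk.cons h.symm Walk.nil, by simp⟩
        · exact ⟨j, Or.inr rfl, Walk.cons h.symm Walk.nil, by simp⟩
      obtain ⟨t1, ht1, A, hA⟩ := hWx
      obtain ⟨t2, ht2, Bw, hBw⟩ := hWy
      have hM : ∃ M : C.Walk t1 t2, M.length ≤ 1 := by
        rcases ht1 with rfl | rfl <;> rcases ht2 with rfl | rfl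
        · exact ⟨Walk.nil, by simp⟩
        · exact ⟨Walk.cons hadj Walk.nil, by simp⟩
        · exact ⟨Walk.cons hadj.symm Walk.nil, by simp⟩
        · exact ⟨Walk.nil, by simp⟩
      obtain ⟨M, hM⟩ := hM
      have h4 := H (A.append (M.append Bw.reverse))
      rw [Walk.length_append, Walk.length_append, Walk.length_reverse] at h4
      omega
    obtain ⟨k, hik, hjk, hki, hkj⟩ := hfind
    have e1 : Cᶜ.Adj i k := by rw [compl_adj]; exact ⟨Ne.symm hki, hik⟩
    have e2 : Cᶜ.Adj k j := by
      rw [compl_adj]; exact ⟨hkj, fun h => hjk h.symm⟩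
    exact e1.reachable.trans e2.reachable
  · exact (Cᶜ.adj_symm (by rw [compl_adj]; exact ⟨Ne.symm hij, fun h => hadj h.symm⟩)).reachable

lemma dist_mono {G H : SimpleGraph V} (h : G ≤ H) {a b : V} (hr : G.Reachable a b) :
    H.dist a b ≤ G.dist a b := by
  obtain ⟨W, hW⟩ := hr.exists_walk_length_eq_dist
  calc H.dist a b ≤ (W.mapLe h).length := SimpleGraph.dist_le _
    _ = G.dist a b := by rw [Walk.length_map]; exact hW

end Aux


namespace Aux2

variable {n : ℕ}

lemma exists_eigenvector {D : Matrix (Fin n) (Fin n) ℝ} {lam : ℝ}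
    (h : lam ∈ spectrum ℝ D) : ∃ v : Fin n → ℝ, v ≠ 0 ∧ D *ᵥ v = lam • v := by
  have h' : lam ∈ spectrum ℝ (Matrix.toLinAlgEquiv' D) := by
    rwa [AlgEquiv.spectrum_eq Matrix.toLinAlgEquiv' D]
  have he : Module.End.HasEigenvalue (Matrix.toLinAlgEquiv' D) lam :=
    (Module.End.hasEigenvalue_iff_mem_spectrum).mpr h'
  obtain ⟨v, hv⟩ := he.exists_hasEigenvector
  refine ⟨v, hv.2, ?_⟩
  have h2 := hv.1
  rw [Module.End.mem_eigenspace_iff] at h2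
  have h3 : Matrix.toLinAlgEquiv' D v = D *ᵥ v := rfl
  rw [h3] at h2
  exact h2

lemma psd_of_ub {D : Matrix (Fin n) (Fin n) ℝ} (hD : D.IsHermitian) {lam : ℝ}
    (hub : ∀ μ ∈ spectrum ℝ D, μ ≤ lam) :
    (lam • (1 : Matrix (Fin n) (Fin n) ℝ) - D).PosSemidef := by
  have hM : (lam • (1 : Matrix (Fin n) (Fin n) ℝ) - D).IsHermitian := by
    unfold Matrix.IsHermitian
    rw [conjTranspose_sub, conjTranspose_smul, conjTranspose_one, hD.eq, star_trivial]
  apply hM.posSemidef_iff_eigenvalues_nonneg.mpr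
  intro i
  show (0:ℝ) ≤ hM.eigenvalues i
  set μ := hM.eigenvalues i with hmu
  have hmem := hM.eigenvalues_mem_spectrum_real i
  rw [← hmu] at hmem
  have heq : lam • (1 : Matrix (Fin n) (Fin n) ℝ) - D
      = (algebraMap ℝ (Matrix (Fin n) (Fin n) ℝ)) lam - D := by
    rw [Algebra.algebraMap_eq_smul_one]
  rw [heq, ← spectrum.singleton_sub_eq] at hmem
  obtain ⟨a, ha, b, hb, hab⟩ := Set.mem_sub.mp hmem
  rw [Set.mem_singleton_iff] at ha
  subst ha
  have := hub b hb
  linarith [hab]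

lemma quad_le {D : Matrix (Fin n) (Fin n) ℝ} (hD : D.IsHermitian) {lam : ℝ}
    (hub : ∀ μ ∈ spectrum ℝ D, μ ≤ lam) (v : Fin n → ℝ) :
    v ⬝ᵥ (D *ᵥ v) ≤ lam * (v ⬝ᵥ v) := by
  have hpsd := psd_of_ub hD hub
  have h0 := hpsd.dotProduct_mulVec_nonneg v
  rw [star_trivial, sub_mulVec, smul_mulVec, one_mulVec, dotProduct_sub,
    dotProduct_smul] at h0
  simp only [smul_eq_mul] at h0
  linarith

lemma quad_eq {D : Matrix (Fin n) (Fin n) ℝ} (hD : D.IsHermitian) {lam : ℝ}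
    (hub : ∀ μ ∈ spectrum ℝ D, μ ≤ lam) (v : Fin n → ℝ)
    (heq : v ⬝ᵥ (D *ᵥ v) = lam * (v ⬝ᵥ v)) : D *ᵥ v = lam • v := by
  have hpsd := psd_of_ub hD hub
  have h0 : star v ⬝ᵥ ((lam • (1 : Matrix (Fin n) (Fin n) ℝ) - D) *ᵥ v) = 0 := by
    rw [star_trivial, sub_mulVec, smul_mulVec, one_mulVec, dotProduct_sub,
      dotProduct_smul]
    simp only [smul_eq_mul]
    linarith
  have := (hpsd.dotProduct_mulVec_zero_iff v).mp h0
  rw [sub_mulVec, smul_mulVec, one_mulVec, sub_eq_zero] at this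
  exact this.symm

end Aux2

/-- If the connected block graph `B` has two cut vertices lying in no common block,
then the distance spectral radius of `Bᶜ` is at most that of `C_Bᶜ`, with equality
iff `B ≅ C_B`. -/
theorem stmt11 {n : ℕ} (B C : SimpleGraph (Fin n))
    (hB : B.Connected) (hC : IsBlockCompletion B C)
    (hcut : ∃ u w : Fin n, u ≠ w ∧ IsCutVertex B u ∧ IsCutVertex B w ∧
      ¬ ∃ s : Set (Fin n), IsBlock B s ∧ u ∈ s ∧ w ∈ s)
    (lamB lamC : ℝ)
    (hlamB : IsGreatest (spectrum ℝ (distMatrix Bᶜ)) lamB)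
    (hlamC : IsGreatest (spectrum ℝ (distMatrix Cᶜ)) lamC) :
    lamB ≤ lamC ∧ (lamB = lamC ↔ Nonempty (B ≃g C)) := by
  classical
  have hBC : B ≤ C := by
    intro a b hab
    exact (hC a b).mpr ⟨hab.ne, Aux.exists_block_of_adj hab⟩
  have hCBc : Cᶜ ≤ Bᶜ := by
    intro a b hab
    rw [compl_adj] at hab ⊢
    exact ⟨hab.1, fun h => hab.2 (hBC h)⟩
  have hfar : ∃ x y : Fin n, ∀ W : C.Walk x y, 4 ≤ W.length := by
    obtain ⟨u, w, huw, hu, hw, hnb⟩ := hcut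
    exact Aux.exists_far_pair hC hB hBC ⟨u, w, huw, hu, hw, hnb⟩
  have hCpre : Cᶜ.Preconnected := Aux.compl_preconnected hfar
  set DB := distMatrix Bᶜ with hDBdef
  set DC := distMatrix Cᶜ with hDCdef
  have hDCherm : DC.IsHermitian := distMatrix_isHermitian _
  have hmono : ∀ i j, DB i j ≤ DC i j := by
    intro i j
    simp only [hDBdef, hDCdef, distMatrix]
    exact_mod_cast Aux.dist_mono hCBc (hCpre i j)
  have hDBnn : ∀ i j, 0 ≤ DB i j := by
    intro i j
    simp only [hDBdef, distMatrix]
    exact_mod_cast Nat.zero_le _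
  have hDCoff : ∀ i j, i ≠ j → 1 ≤ DC i j := by
    intro i j hij
    simp only [hDCdef, distMatrix]
    exact_mod_cast (hCpre i j).pos_dist_of_ne hij
  have hub : ∀ μ ∈ spectrum ℝ DC, μ ≤ lamC := fun μ hμ => hlamC.2 hμ
  obtain ⟨v, hv0, hev⟩ := Aux2.exists_eigenvector hlamB.1
  set y : Fin n → ℝ := fun i => |v i| with hydef
  have hyy : y ⬝ᵥ y = v ⬝ᵥ v := by
    simp [dotProduct, hydef, abs_mul_abs_self]
  have hvv : 0 < v ⬝ᵥ v := by
    obtain ⟨i, hi⟩ := Function.ne_iff.mp hv0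
    exact Finset.sum_pos' (fun j _ => mul_self_nonneg (v j))
      ⟨i, Finset.mem_univ i, mul_self_pos.mpr hi⟩
  have expand : ∀ (M : Matrix (Fin n) (Fin n) ℝ) (a b : Fin n → ℝ),
      a ⬝ᵥ (M *ᵥ b) = ∑ i, ∑ j, a i * (M i j * b j) := by
    intro M a b
    simp [dotProduct, mulVec, Finset.mul_sum]
  have step1 : v ⬝ᵥ (DB *ᵥ v) = lamB * (v ⬝ᵥ v) := by
    rw [hev, dotProduct_smul, smul_eq_mul]
  have step2 : v ⬝ᵥ (DB *ᵥ v) ≤ y ⬝ᵥ (DB *ᵥ y) := by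
    rw [expand, expand]
    refine Finset.sum_le_sum fun i _ => Finset.sum_le_sum fun j _ => ?_
    calc v i * (DB i j * v j) ≤ |v i * (DB i j * v j)| := le_abs_self _
      _ = y i * (DB i j * y j) := by
          simp only [hydef, abs_mul, abs_of_nonneg (hDBnn i j)]
  have step3le : ∀ i j, y i * (DB i j * y j) ≤ y i * (DC i j * y j) := by
    intro i j
    refine mul_le_mul_of_nonneg_left ?_ (abs_nonneg _)
    exact mul_le_mul_of_nonneg_right (hmono i j) (abs_nonneg _)
  have step3 : y ⬝ᵥ (DB *ᵥ y) ≤ y ⬝ᵥ (DC *ᵥ y) := by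
    rw [expand, expand]
    exact Finset.sum_le_sum fun i _ => Finset.sum_le_sum fun j _ => step3le i j
  have step4 : y ⬝ᵥ (DC *ᵥ y) ≤ lamC * (y ⬝ᵥ y) := Aux2.quad_le hDCherm hub y
  have hineq : lamB ≤ lamC := by
    have h : lamB * (v ⬝ᵥ v) ≤ lamC * (v ⬝ᵥ v) := by
      calc lamB * (v ⬝ᵥ v) = v ⬝ᵥ (DB *ᵥ v) := step1.symm
        _ ≤ y ⬝ᵥ (DC *ᵥ y) := le_trans step2 step3
        _ ≤ lamC * (y ⬝ᵥ y) := step4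
        _ = lamC * (v ⬝ᵥ v) := by rw [hyy]
    exact le_of_mul_le_mul_right h hvv
  refine ⟨hineq, ?_, ?_⟩
  · intro heq
    have hBeqC : B = C := by
      by_contra hne
      obtain ⟨a, b, hCadj, hBnadj⟩ : ∃ a b, C.Adj a b ∧ ¬B.Adj a b := by
        by_contra hno
        push_neg at hno
        apply hne
        ext a b
        exact ⟨fun h => hBC h, fun h => hno a b h⟩
      have hDB1 : DB a b = 1 := by
        have hadj : Bᶜ.Adj a b := by rw [compl_adj]; exact ⟨hCadj.ne, hBnadj⟩
        simp only [hDBdef, distMatrix]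
        exact_mod_cast SimpleGraph.dist_eq_one_iff_adj.mpr hadj
      have hDC2 : 2 ≤ DC a b := by
        have hradj : ¬Cᶜ.Adj a b := fun h => ((compl_adj C a b).mp h).2 hCadj
        have hdist : 2 ≤ Cᶜ.dist a b := by
          have h0 : Cᶜ.dist a b ≠ 0 :=
            Nat.pos_iff_ne_zero.mp ((hCpre a b).pos_dist_of_ne hCadj.ne)
          have h1 : Cᶜ.dist a b ≠ 1 :=
            fun h => hradj (SimpleGraph.dist_eq_one_iff_adj.mp h)
          omega
        simp only [hDCdef, distMatrix]
        exact_mod_cast hdist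
      have e4 : y ⬝ᵥ (DC *ᵥ y) = lamC * (y ⬝ᵥ y) := by
        apply le_antisymm step4
        calc lamC * (y ⬝ᵥ y) = lamB * (v ⬝ᵥ v) := by rw [hyy, heq]
          _ = v ⬝ᵥ (DB *ᵥ v) := step1.symm
          _ ≤ y ⬝ᵥ (DB *ᵥ y) := step2
          _ ≤ y ⬝ᵥ (DC *ᵥ y) := step3
      have hevC : DC *ᵥ y = lamC • y := Aux2.quad_eq hDCherm hub y e4
      have hypos : ∀ i, 0 < y i := by
        intro i
        rcases lt_or_eq_of_le (abs_nonneg (v i)) with h | h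
        · exact h
        · exfalso
          have hyi : y i = 0 := h.symm
          have hrow : (DC *ᵥ y) i = 0 := by
            rw [hevC]
            simp [hyi]
          have hsum : ∑ j, DC i j * y j = 0 := by
            rw [← hrow]
            simp [mulVec, dotProduct]
          have hterm := (Finset.sum_eq_zero_iff_of_nonneg
            (fun j _ => mul_nonneg (le_trans (hDBnn i j) (hmono i j)) (abs_nonneg (v j)))).mp hsum
          have hyall : ∀ j, y j = 0 := by
            intro j
            by_cases hji : j = i
            · rw [hji]; exact hyi
            · have hj := hterm j (Finset.mem_univ j)
              have hpos : (0:ℝ) < DC i j :=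
                lt_of_lt_of_le one_pos (hDCoff i j (Ne.symm hji))
              rcases mul_eq_zero.mp hj with h' | h'
              · exact absurd h' (ne_of_gt hpos)
              · exact h'
          apply hv0
          funext j
          exact abs_eq_zero.mp (hyall j)
      have e3 : y ⬝ᵥ (DB *ᵥ y) = y ⬝ᵥ (DC *ᵥ y) := by
        apply le_antisymm step3
        calc y ⬝ᵥ (DC *ᵥ y) = lamC * (y ⬝ᵥ y) := e4
          _ = lamB * (v ⬝ᵥ v) := by rw [hyy, heq]
          _ = v ⬝ᵥ (DB *ᵥ v) := step1.symm
          _ ≤ y ⬝ᵥ (DB *ᵥ y) := step2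
      have hstrict : y ⬝ᵥ (DB *ᵥ y) < y ⬝ᵥ (DC *ᵥ y) := by
        rw [expand, expand]
        refine Finset.sum_lt_sum (fun i _ => Finset.sum_le_sum fun j _ => step3le i j)
          ⟨a, Finset.mem_univ a, ?_⟩
        refine Finset.sum_lt_sum (fun j _ => step3le a j) ⟨b, Finset.mem_univ b, ?_⟩
        have h1 : DB a b < DC a b := by rw [hDB1]; linarith
        have h2 : DB a b * y b < DC a b * y b := mul_lt_mul_of_pos_right h1 (hypos b)
        exact mul_lt_mul_of_pos_left h2 (hypos a)
      rw [e3] at hstrict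
      exact lt_irrefl _ hstrict
    subst hBeqC
    exact ⟨Iso.refl⟩
  · rintro ⟨iso⟩
    have hcard : B.edgeFinset.card = C.edgeFinset.card := by
      rw [SimpleGraph.edgeFinset_card, SimpleGraph.edgeFinset_card]
      exact Fintype.card_congr iso.mapEdgeSet
    have hsub : B.edgeFinset ⊆ C.edgeFinset :=
      SimpleGraph.edgeFinset_subset_edgeFinset.mpr hBC
    have hfe : B.edgeFinset = C.edgeFinset :=
      Finset.eq_of_subset_of_card_le hsub hcard.ge
    have hBeqC : B = C := SimpleGraph.edgeFinset_inj.mp hfe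
    subst hBeqC
    exact IsGreatest.unique hlamB hlamC
end

section
/- If G is a connected simple graph on n vertices containing two nonadjacent cut vertices, then the diameter of G is at least 4. -/
open SimpleGraph

private lemma induce_reachable {V : Type*} {G : SimpleGraph V} {s : Set V} :
    ∀ {a b : V} (w : G.Walk a b) (hs : ∀ x ∈ w.support, x ∈ s),
    (G.induce s).Reachable ⟨a, hs a w.start_mem_support⟩ ⟨b, hs b w.end_mem_support⟩
  | _, _, SimpleGraph.Walk.nil, _ => SimpleGraph.Reachable.refl _
  | a, b, SimpleGraph.Walk.cons h p, hs => by
      refine (SimpleGraph.Adj.reachable (v := (⟨_, hs _ (by simp)⟩ : s)) (by simpa using h)).trans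
        (induce_reachable p (fun x hx => hs x (by simp [hx])))

/-- From a cut vertex `u` and a vertex `v ≠ u`, extract a vertex `x ≠ u` all of whose
walks to `v` pass through `u`. -/
private lemma cut_sep {V : Type*} {G : SimpleGraph V} {u v : V} (hvu : v ≠ u)
    (hu : IsCutVertex G u) :
    ∃ x : V, x ≠ u ∧ ∀ w : G.Walk x v, u ∈ w.support := by
  by_contra hcon
  push_neg at hcon
  apply hu
  rw [SimpleGraph.connected_iff]
  refine ⟨?_, ?_⟩
  · rintro ⟨x, hx⟩ ⟨y, hy⟩
    obtain ⟨wx, hwx⟩ := hcon x hx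
    obtain ⟨wy, hwy⟩ := hcon y hy
    have hx' : ∀ z ∈ wx.support, z ∈ {w | w ≠ u} := fun z hz hzu => hwx (hzu ▸ hz)
    have hy' : ∀ z ∈ wy.support, z ∈ {w | w ≠ u} := fun z hz hzu => hwy (hzu ▸ hz)
    exact (induce_reachable wx hx').trans (induce_reachable wy hy').symm
  · exact ⟨⟨v, hvu⟩⟩


/-- If every walk from `x` to `v` passes through `u` (with `u ≠ v`), then there is a
walk from `x` to `u` avoiding `v`. -/
private lemma avoid_walk {V : Type*} [DecidableEq V] {G : SimpleGraph V} {u v x : V}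
    (huv : u ≠ v) (hreach : G.Reachable x v)
    (hx : ∀ w : G.Walk x v, u ∈ w.support) :
    ∃ q : G.Walk x u, v ∉ q.support := by
  obtain ⟨w⟩ := hreach
  let p : G.Path x v := w.toPath
  have hup : u ∈ p.1.support := hx p.1
  refine ⟨p.1.takeUntil u hup, fun hvt => ?_⟩
  have hnd : p.1.support.Nodup := p.2.support_nodup
  have hsp : p.1.support = (p.1.takeUntil u hup).support ++ (p.1.dropUntil u hup).support.tail := by
    conv_lhs => rw [← p.1.take_spec hup]
    exact SimpleGraph.Walk.support_append _ _
  rw [hsp] at hnd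
  have hvd : v ∈ (p.1.dropUntil u hup).support.tail :=
    SimpleGraph.Walk.end_mem_tail_support_of_ne huv _
  exact (List.disjoint_of_nodup_append hnd) hvt hvd

/-- A connected graph containing two distinct nonadjacent cut vertices has
diameter at least 4. -/
theorem stmt16 {n : ℕ} (G : SimpleGraph (Fin n)) (hG : G.Connected)
    (u v : Fin n) (huv : u ≠ v) (hadj : ¬ G.Adj u v)
    (hu : IsCutVertex G u) (hv : IsCutVertex G v) :
    ∃ a b : Fin n, 4 ≤ G.dist a b := by
  obtain ⟨x, hxu, hx⟩ := cut_sep huv.symm hu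
  obtain ⟨y, hyv, hy⟩ := cut_sep huv hv
  -- basic distinctness
  have hxv : x ≠ v := by
    rintro rfl
    have := hx SimpleGraph.Walk.nil
    simp at this
    exact huv this
  have hyu : y ≠ u := by
    rintro rfl
    have := hy SimpleGraph.Walk.nil
    simp at this
    exact huv this.symm
  -- walks avoiding the other cut vertex
  obtain ⟨q, hq⟩ : ∃ q : G.Walk x u, v ∉ q.support := avoid_walk huv (hG x v) hx
  obtain ⟨r, hr⟩ : ∃ r : G.Walk y v, u ∉ r.support := avoid_walk huv.symm (hG y u) hy
  have hxy : x ≠ y := by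
    rintro rfl
    exact hq (hy q)
  -- distance facts
  have hd1 : 1 ≤ G.dist x u := hG.pos_dist_of_ne hxu
  have hd2 : 2 ≤ G.dist u v := by
    have h0 : G.dist u v ≠ 0 := Nat.pos_iff_ne_zero.mp (hG.pos_dist_of_ne huv)
    have h1 : G.dist u v ≠ 1 := fun h => hadj (SimpleGraph.dist_eq_one_iff_adj.mp h)
    omega
  have hd2' : 2 ≤ G.dist v u := by rwa [SimpleGraph.dist_comm]
  have hd3 : 1 ≤ G.dist v y := hG.pos_dist_of_ne hyv.symm
  have hd1' : 1 ≤ G.dist x v := hG.pos_dist_of_ne hxv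
  have hd3' : 1 ≤ G.dist u y := hG.pos_dist_of_ne hyu.symm
  refine ⟨x, y, ?_⟩
  obtain ⟨w, hw⟩ := SimpleGraph.exists_walk_of_dist_ne_zero
    (Nat.pos_iff_ne_zero.mp (hG.pos_dist_of_ne hxy))
  rw [← hw]
  -- u and v both lie on w
  have hus : u ∈ w.support := by
    have := hx (w.append r)
    rw [SimpleGraph.Walk.mem_support_append_iff] at this
    rcases this with h | h
    · exact h
    · exact absurd h hr
  have hvs : v ∈ w.support := by
    have := hy (w.reverse.append q)
    rw [SimpleGraph.Walk.mem_support_append_iff] at this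
    rcases this with h | h
    · simpa using h
    · exact absurd h hq
  -- split w at u
  set A := w.takeUntil u hus with hA
  set B := w.dropUntil u hus with hB
  have hlen : w.length = A.length + B.length := by
    conv_lhs => rw [← w.take_spec hus]
    exact SimpleGraph.Walk.length_append _ _
  have hvAB : v ∈ A.support ∨ v ∈ B.support := by
    rw [← SimpleGraph.Walk.mem_support_append_iff, w.take_spec hus]
    exact hvs
  rcases hvAB with hvA | hvB
  · -- x → v → u → y
    have h1 : G.dist x v ≤ (A.takeUntil v hvA).length := SimpleGraph.dist_le _
    have h2 : G.dist v u ≤ (A.dropUntil v hvA).length := SimpleGraph.dist_le _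
    have h3 : G.dist u y ≤ B.length := SimpleGraph.dist_le _
    have hAlen : A.length = (A.takeUntil v hvA).length + (A.dropUntil v hvA).length := by
      conv_lhs => rw [← A.take_spec hvA]
      exact SimpleGraph.Walk.length_append _ _
    omega
  · -- x → u → v → y
    have h1 : G.dist x u ≤ A.length := SimpleGraph.dist_le _
    have h2 : G.dist u v ≤ (B.takeUntil v hvB).length := SimpleGraph.dist_le _
    have h3 : G.dist v y ≤ (B.dropUntil v hvB).length := SimpleGraph.dist_le _
    have hBlen : B.length = (B.takeUntil v hvB).length + (B.dropUntil v hvB).length := by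
      conv_lhs => rw [← B.take_spec hvB]
      exact SimpleGraph.Walk.length_append _ _
    omega
end
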